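/- arXiv:math/0610857 — 2 statements merged into one kernel-verified Lean document; each statement's English description precedes it below -/
import Mathlib

section
/- Let X be a path-connected topological space which is contractible and contains more than one point. Then there exists a continuous map s from the space F(X;2) of ordered pairs of distinct points of X to the space P'X of paths with distinct endpoints, such that s is a section of the endpoint map π'(γ) = (γ(0), γ(1)) and is equivariant with respect to the involutions swapping factors on F(X;2) and reversing paths on P'X. Consequently TC^S(X) = 2. -/
open scoped ENat

universe u v

/-- Space of paths in `X`: continuous maps from the unit interval. -/
abbrev PathSp (X : Type u) [TopologicalSpace X] := C(unitInterval, X)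

/-- Reversal of a path. -/
def pathRev {X : Type u} [TopologicalSpace X] (γ : PathSp X) : PathSp X :=
  γ.comp ⟨unitInterval.symm, unitInterval.continuous_symm⟩

/-- `P'X`: paths with distinct endpoints. -/
def PpX (X : Type u) [TopologicalSpace X] := {γ : PathSp X // γ 0 ≠ γ 1}

instance (X : Type u) [TopologicalSpace X] : TopologicalSpace (PpX X) :=
  instTopologicalSpaceSubtype

/-- Reversal involution on `P'X`. -/
def revP {X : Type u} [TopologicalSpace X] (γ : PpX X) : PpX X :=
  ⟨pathRev γ.1, by
    simp only [pathRev, ContinuousMap.comp_apply, ContinuousMap.coe_mk,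
      unitInterval.symm_zero, unitInterval.symm_one]
    exact γ.2.symm⟩

/-- `F(X;2)`: ordered configuration space of two distinct points. -/
def F2 (X : Type u) [TopologicalSpace X] := {z : X × X // z.1 ≠ z.2}

instance (X : Type u) [TopologicalSpace X] : TopologicalSpace (F2 X) :=
  instTopologicalSpaceSubtype

/-- The swap involution on `F(X;2)`. -/
def swapF {X : Type u} [TopologicalSpace X] (z : F2 X) : F2 X :=
  ⟨(z.1.2, z.1.1), z.2.symm⟩

/-- The two-endpoint map `π' : P'X → F(X;2)`. -/
def pip {X : Type u} [TopologicalSpace X] (γ : PpX X) : F2 X :=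
  ⟨(γ.1 0, γ.1 1), γ.2⟩

/-- Quotient of `P'X` by the reversal involution. -/
def PpQ (X : Type u) [TopologicalSpace X] := Quot (fun a b : PpX X => b = revP a)

/-- `B(X;2)`: unordered configuration space, quotient of `F(X;2)` by the swap. -/
def BX2 (X : Type u) [TopologicalSpace X] := Quot (fun a b : F2 X => b = swapF a)

instance (X : Type u) [TopologicalSpace X] : TopologicalSpace (PpQ X) :=
  inferInstanceAs (TopologicalSpace (Quot _))
instance (X : Type u) [TopologicalSpace X] : TopologicalSpace (BX2 X) :=
  inferInstanceAs (TopologicalSpace (Quot _))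

/-- The quotient fibration `π_G : P'X/G → B(X;2)`. -/
def piG (X : Type u) [TopologicalSpace X] : PpQ X → BX2 X :=
  Quot.map pip (by
    rintro a b rfl
    refine Subtype.ext (Prod.ext ?_ ?_) <;>
      simp [pip, revP, swapF, pathRev])

/-- `p` admits continuous local sections over an open cover of the base by `k` sets. -/
def SecCover {E : Type u} {B : Type v} [TopologicalSpace E] [TopologicalSpace B]
    (p : E → B) (k : ℕ) : Prop :=
  ∃ U : Fin k → Set B, (∀ i, IsOpen (U i)) ∧ (⋃ i, U i) = Set.univ ∧
    ∀ i, ∃ s : C(U i, E), ∀ x : U i, p (s x) = (x : B)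

/-- The Schwarz genus of a map: minimal number of open sets covering the base over each
of which the map admits a continuous section (`⊤` if there is no such finite cover). -/
noncomputable def genus {E : Type u} {B : Type v} [TopologicalSpace E] [TopologicalSpace B]
    (p : E → B) : ℕ∞ :=
  sInf {m : ℕ∞ | ∃ k : ℕ, m = (k : ℕ∞) ∧ SecCover p k}

/-- Topological complexity: the Schwarz genus of the two-endpoint path fibration. -/
noncomputable def TCx (X : Type u) [TopologicalSpace X] : ℕ∞ :=
  genus (fun γ : PathSp X => (γ 0, γ 1))

/-- Symmetric topological complexity: `1 +` the Schwarz genus of `π_G`. -/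
noncomputable def TCS (X : Type u) [TopologicalSpace X] : ℕ∞ :=
  1 + genus (piG X)

section Aux

variable {X : Type u} [TopologicalSpace X]

open Set unitInterval

noncomputable def prI : ℝ → unitInterval := Set.projIcc 0 1 zero_le_one

lemma prI_zero : prI 0 = 0 := by
  apply Subtype.ext
  simp [prI, Set.projIcc]

lemma prI_one : prI 1 = 1 := by
  apply Subtype.ext
  simp [prI, Set.projIcc]

lemma prI_continuous : Continuous prI := continuous_projIcc

/-- The equivariant section exists. -/
theorem exists_equiv_section (X : Type u) [TopologicalSpace X] [ContractibleSpace X] :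
    ∃ s : C(F2 X, PpX X),
      (∀ z : F2 X, pip (s z) = z) ∧
      (∀ z : F2 X, s (swapF z) = revP (s z)) := by
  obtain ⟨x₀, ⟨H⟩⟩ := id_nullhomotopic X
  classical
  set G : (X × X) × unitInterval → X := fun p =>
    if (p.2 : ℝ) ≤ 1/2 then H (prI (2 * p.2), p.1.1) else H (prI (2 - 2 * p.2), p.1.2)
    with hGdef
  have key : ∀ (x y : X) (t : unitInterval), (t : ℝ) = 1/2 →
      H (prI (2 * t), x) = H (prI (2 - 2 * t), y) := by
    intro x y t ht
    have h1 : (2 : ℝ) * t = 1 := by rw [ht]; norm_num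
    have h2 : (2 : ℝ) - 2 * t = 1 := by rw [ht]; norm_num
    rw [h1]
    norm_num [prI_one, H.apply_one]
  have hG : Continuous G := by
    apply Continuous.if_le
    · exact H.continuous.comp ((prI_continuous.comp (by continuity)).prodMk
        (continuous_fst.comp continuous_fst))
    · exact H.continuous.comp ((prI_continuous.comp (by continuity)).prodMk
        (continuous_snd.comp continuous_fst))
    · exact continuous_subtype_val.comp continuous_snd
    · exact continuous_const
    · intro p hp
      exact key _ _ _ hp
  set Gc : C((X × X) × unitInterval, X) := ⟨G, hG⟩ with hGc
  have hend0 : ∀ z : X × X, Gc.curry z 0 = z.1 := by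
    intro z
    show G (z, 0) = z.1
    have : ((0 : unitInterval) : ℝ) ≤ 1/2 := by norm_num
    simp only [hGdef, this, if_pos]
    norm_num [prI_zero, H.apply_zero]
  have hend1 : ∀ z : X × X, Gc.curry z 1 = z.2 := by
    intro z
    show G (z, 1) = z.2
    have : ¬ ((1 : unitInterval) : ℝ) ≤ 1/2 := by norm_num
    simp only [hGdef, this, if_neg, not_false_iff]
    norm_num [prI_zero, H.apply_zero]
  refine ⟨⟨fun z => ⟨Gc.curry z.1, by rw [hend0, hend1]; exact z.2⟩, ?_⟩, ?_, ?_⟩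
  · exact Continuous.subtype_mk (Gc.curry.continuous.comp continuous_subtype_val) _
  · intro z
    exact Subtype.ext (Prod.ext (hend0 z.1) (hend1 z.1))
  · intro z
    apply Subtype.ext
    apply ContinuousMap.ext
    intro t
    show G ((z.1.2, z.1.1), t) = G (z.1, σ t)
    obtain ⟨⟨x, y⟩, hz⟩ := z
    have hσ : ((σ t : unitInterval) : ℝ) = 1 - t := unitInterval.coe_symm_eq t
    show (if (t : ℝ) ≤ 1/2 then H (prI (2 * t), y) else H (prI (2 - 2 * t), x))
      = (if ((σ t : unitInterval) : ℝ) ≤ 1/2 then H (prI (2 * (σ t : unitInterval)), x)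
          else H (prI (2 - 2 * (σ t : unitInterval)), y))
    rw [hσ]
    by_cases h1 : (t : ℝ) ≤ 1/2 <;> by_cases h2 : (1 : ℝ) - t ≤ 1/2
    · have ht : (t : ℝ) = 1/2 := by linarith
      rw [if_pos h1, if_pos h2]
      have e1 : 2 * (t : ℝ) = 1 := by rw [ht]; norm_num
      have e2 : 2 * (1 - (t : ℝ)) = 1 := by rw [ht]; norm_num
      rw [e1, e2, prI_one, H.apply_one, H.apply_one]
      rfl
    · rw [if_pos h1, if_neg h2]
      have e : 2 - 2 * (1 - (t : ℝ)) = 2 * t := by ring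
      rw [e]
    · rw [if_neg h1, if_pos h2]
      have e : 2 * (1 - (t : ℝ)) = 2 - 2 * t := by ring
      rw [e]
    · exact absurd (by linarith : (t : ℝ) ≤ 1/2) h1

end Aux

/-- If `X` is a path-connected, contractible space with more than one point,
then the endpoint map `π' : P'X → F(X;2)` admits a continuous equivariant section, and
consequently `TC^S(X) = 2`. -/
theorem stmt0 (X : Type u) [TopologicalSpace X] [PathConnectedSpace X]
    [ContractibleSpace X] (hX : ∃ a b : X, a ≠ b) :
    (∃ s : C(F2 X, PpX X),
      (∀ z : F2 X, pip (s z) = z) ∧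
      (∀ z : F2 X, s (swapF z) = revP (s z))) ∧
    TCS X = 2 := by
  obtain ⟨s, hsec, heq⟩ := exists_equiv_section X
  refine ⟨⟨s, hsec, heq⟩, ?_⟩
  -- build the quotient section
  have hwd : ∀ a b : F2 X, b = swapF a →
      Quot.mk (fun a b : PpX X => b = revP a) (s a) = Quot.mk _ (s b) := by
    rintro a b rfl
    rw [heq a]
    exact Quot.sound rfl
  let sQ : BX2 X → PpQ X := Quot.lift (fun z => Quot.mk _ (s z)) (fun a b h => hwd a b h)
  have hsQc : Continuous sQ :=
    continuous_quot_lift _ ((continuous_quot_mk).comp s.continuous)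
  have hsQ : ∀ b : BX2 X, piG X (sQ b) = b := by
    apply Quot.ind
    intro z
    have h1 : piG X (sQ (Quot.mk _ z)) =
        Quot.mk (fun a b : F2 X => b = swapF a) (pip (s z)) := by
      simp only [sQ, piG]
      rfl
    rw [h1, hsec z]
  obtain ⟨a, b, hab⟩ := hX
  have hBne : Nonempty (BX2 X) := ⟨Quot.mk _ ⟨(a, b), hab⟩⟩
  have hcov : SecCover (piG X) 1 := by
    refine ⟨fun _ => Set.univ, fun _ => isOpen_univ, Set.iUnion_const _, fun i => ?_⟩
    exact ⟨⟨fun x => sQ x.1, hsQc.comp continuous_subtype_val⟩, fun x => hsQ x.1⟩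
  have hg : genus (piG X) = 1 := by
    apply le_antisymm
    · exact sInf_le ⟨1, by norm_num, hcov⟩
    · apply le_sInf
      rintro m ⟨k, rfl, U, _, hUc, -⟩
      rcases Nat.eq_zero_or_pos k with hk | hk
      · subst hk
        exfalso
        obtain ⟨b0⟩ := hBne
        have : b0 ∈ (⋃ i : Fin 0, U i) := hUc ▸ Set.mem_univ b0
        simp at this
      · exact_mod_cast hk
  rw [TCS, hg]
  rfl
end

section
/- Let X be a path-connected polyhedron (or more generally a Euclidean neighborhood retract). Then the topological complexity TC(X) is less than or equal to the symmetric topological complexity TC^S(X). -/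
open scoped ENat

universe u v

/-- `X` is a Euclidean neighbourhood retract: it embeds in some `ℝⁿ` with image a retract
of an open neighbourhood. -/
def IsENR (X : Type u) [TopologicalSpace X] : Prop :=
  ∃ (n : ℕ) (e : X → (Fin n → ℝ)), Topology.IsEmbedding e ∧
    ∃ N : Set (Fin n → ℝ), IsOpen N ∧ Set.range e ⊆ N ∧
      ∃ r : C(N, X), ∀ (x : X) (h : e x ∈ N), r ⟨e x, h⟩ = x

/-!
A cover of `B(X;2)` by `k` open sets carrying sections of `π_G` pulls back to `k` open sets of
`X × X` off the diagonal carrying sections of `π`: an element of `P'X/G` over `{a, b}` has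
exactly one representative starting at `a`, and this choice is continuous because the swap
moves every point of `F(X;2)` off a neighbourhood of itself. As `X` is an ENR, one more open
set, a neighbourhood of the diagonal, carries the section joining `x` to `y` by the retraction
of the straight segment between their images in `ℝⁿ`. Hence `TC(X) ≤ k + 1`.
-/

open Function Topology

def HasSectionOn {E : Type u} {B : Type v} [TopologicalSpace E] [TopologicalSpace B]
    (p : E → B) (U : Set B) : Prop :=
  ∃ s : C(U, E), ∀ x : U, p (s x) = x

section Genus

variable {E : Type u} {B : Type v} [TopologicalSpace E] [TopologicalSpace B] {p : E → B}

theorem genus_le_of_secCover {k : ℕ} (h : SecCover p k) : genus p ≤ k :=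
  sInf_le ⟨k, rfl, h⟩

theorem exists_secCover_of_genus_ne_top (h : genus p ≠ ⊤) :
    ∃ k : ℕ, genus p = k ∧ SecCover p k := by
  have hne : {m : ℕ∞ | ∃ k : ℕ, m = k ∧ SecCover p k}.Nonempty := by
    refine Set.nonempty_iff_ne_empty.mpr fun hempty => h ?_
    rw [genus, hempty, sInf_empty]
  obtain ⟨k, hk, hcov⟩ := csInf_mem hne
  exact ⟨k, hk, hcov⟩

theorem secCover_succ_of_fin_cons {k : ℕ} {U₀ : Set B} (hU₀ : IsOpen U₀)
    (hs₀ : HasSectionOn p U₀)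
    {W : Fin k → Set B} (hW : ∀ i, IsOpen (W i)) (hsW : ∀ i, HasSectionOn p (W i))
    (hcover : ∀ b ∉ U₀, ∃ i, b ∈ W i) : SecCover p (k + 1) := by
  refine ⟨Fin.cons U₀ W, Fin.cases hU₀ hW, ?_, Fin.cases hs₀ hsW⟩
  refine Set.eq_univ_of_forall fun b => Set.mem_iUnion.mpr ?_
  by_cases hb : b ∈ U₀
  · exact ⟨0, hb⟩
  · obtain ⟨i, hi⟩ := hcover b hb
    exact ⟨i.succ, hi⟩

end Genus

section InvolutionQuotient

variable {α β Y : Type*} {f : α → α} {g : β → β}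

theorem Function.Involutive.quot_mk_eq_mk_iff (hf : Involutive f) {x y : α} :
    Quot.mk (fun a b => b = f a) x = Quot.mk _ y ↔ y = x ∨ y = f x := by
  have hequiv : Equivalence fun x y : α => y = x ∨ y = f x :=
    ⟨fun _ => Or.inl rfl,
      fun {x y} h => h.elim (fun h => Or.inl h.symm) fun h => Or.inr (by rw [h, hf]),
      fun {x y z} hxy hyz => by
        rcases hxy with rfl | rfl <;> rcases hyz with rfl | rfl
        exacts [Or.inl rfl, Or.inr rfl, Or.inr rfl, Or.inl (hf _)]⟩
  refine ⟨fun h => hequiv.eqvGen_iff.mp (Relation.EqvGen.mono (fun _ _ => Or.inr) _ _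
    (Quot.eqvGen_exact h)), ?_⟩
  rintro (rfl | rfl)
  · rfl
  · exact Quot.sound rfl

variable [TopologicalSpace α] [TopologicalSpace β] [TopologicalSpace Y]

theorem Function.Involutive.isOpenMap_quot_mk (hf : Involutive f) (hfc : Continuous f) :
    IsOpenMap (Quot.mk (fun a b => b = f a)) := by
  intro T hT
  have hsat : Quot.mk (fun a b => b = f a) ⁻¹' (Quot.mk _ '' T) = T ∪ f ⁻¹' T := by
    ext x
    simp only [Set.mem_preimage, Set.mem_image, Set.mem_union, hf.quot_mk_eq_mk_iff]
    constructor
    · rintro ⟨y, hy, rfl | rfl⟩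
      exacts [Or.inl hy, Or.inr ((hf y).symm ▸ hy)]
    · rintro (hx | hx)
      exacts [⟨x, hx, Or.inl rfl⟩, ⟨f x, hx, Or.inr (hf x).symm⟩]
  rw [← isQuotientMap_quot_mk.isOpen_preimage, hsat]
  exact hT.union (hT.preimage hfc)

theorem Function.Involutive.exists_continuous_lift (hf : Involutive f) (hfc : Continuous f)
    (hg : Involutive g) (hsep : ∀ b, ∃ W, IsOpen W ∧ b ∈ W ∧ Disjoint W (g ⁻¹' W))
    {p : α → β} (hpc : Continuous p) (hp : ∀ a, p (f a) = g (p a))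
    {π : Quot (fun a b => b = f a) → Quot (fun a b => b = g a)}
    (hπ : ∀ a, π (Quot.mk _ a) = Quot.mk _ (p a))
    {S : Y → Quot (fun a b => b = f a)} (hS : Continuous S) {h : Y → β}
    (hh : Continuous h) (hSh : ∀ y, π (S y) = Quot.mk _ (h y)) :
    ∃ L : C(Y, α), ∀ y, Quot.mk _ (L y) = S y ∧ p (L y) = h y := by
  have hlift : ∀ y, ∃ a, Quot.mk _ a = S y ∧ p a = h y := fun y => by
    obtain ⟨a, ha⟩ := Quot.exists_rep (S y)
    rcases hg.quot_mk_eq_mk_iff.mp ((hπ a).symm.trans (ha ▸ hSh y)) with hpa | hpa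
    · exact ⟨a, ha, hpa.symm⟩
    · exact ⟨f a, (Quot.sound (r := fun a b => b = f a) rfl).symm.trans ha,
        (hp a).trans hpa.symm⟩
  choose L hLS hLh using hlift
  refine ⟨⟨L, continuous_iff_continuousAt.mpr fun y₀ => ?_⟩, fun y => ⟨hLS y, hLh y⟩⟩
  obtain ⟨W, hWo, hW₀, hW⟩ := hsep (h y₀)
  refine tendsto_nhds.mpr fun T hTo hT₀ => ?_
  let T' := T ∩ p ⁻¹' W
  have hT'o : IsOpen T' := hTo.inter (hWo.preimage hpc)
  have hnhds : S ⁻¹' (Quot.mk _ '' T') ∩ h ⁻¹' W ∈ 𝓝 y₀ :=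
    (((hf.isOpenMap_quot_mk hfc) T' hT'o).preimage hS |>.inter (hWo.preimage hh)).mem_nhds
      ⟨⟨L y₀, ⟨hT₀, by rwa [Set.mem_preimage, hLh]⟩, hLS y₀⟩, hW₀⟩
  refine Filter.mem_of_superset hnhds ?_
  rintro y ⟨⟨δ, ⟨hδT, hδW⟩, hδ⟩, hyW⟩
  rcases hf.quot_mk_eq_mk_iff.mp (hδ.trans (hLS y).symm) with hLy | hLy
  · exact show L y ∈ T from hLy ▸ hδT
  · -- then `h y = g (p δ)` with both `p δ` and `h y` in `W`
    refine (Set.disjoint_left.mp hW hδW ?_).elim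
    rw [Set.mem_preimage, ← hp, ← hLy, hLh]
    exact hyW

end InvolutionQuotient

section Configuration

variable {X : Type u} [TopologicalSpace X]

theorem revP_involutive : Involutive (revP (X := X)) := fun γ =>
  Subtype.ext <| ContinuousMap.ext fun t => by simp [revP, pathRev]

theorem continuous_revP : Continuous (revP (X := X)) :=
  ((ContinuousMap.continuous_precomp _).comp continuous_subtype_val).subtype_mk _

theorem swapF_involutive : Involutive (swapF (X := X)) := fun _ => rfl

theorem continuous_pip : Continuous (pip (X := X)) :=
  (((continuous_eval_const 0).prodMk (continuous_eval_const 1)).comp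
    continuous_subtype_val).subtype_mk _

theorem pip_revP (γ : PpX X) : pip (revP γ) = swapF (pip γ) := by
  refine Subtype.ext (Prod.ext ?_ ?_) <;> simp [pip, revP, swapF, pathRev]

theorem exists_isOpen_disjoint_swapF_preimage [T2Space X] (z : F2 X) :
    ∃ W : Set (F2 X), IsOpen W ∧ z ∈ W ∧ Disjoint W (swapF ⁻¹' W) := by
  obtain ⟨A, B, hA, hB, hzA, hzB, hAB⟩ := t2_separation z.2
  refine ⟨{w | w.1.1 ∈ A ∧ w.1.2 ∈ B}, ?_, ⟨hzA, hzB⟩, ?_⟩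
  · exact (hA.preimage (continuous_fst.comp continuous_subtype_val)).inter
      (hB.preimage (continuous_snd.comp continuous_subtype_val))
  · exact Set.disjoint_left.mpr fun w hw hw' => Set.disjoint_left.mp hAB hw.1 hw'.2

end Configuration

def orderedPreimage {X : Type u} [TopologicalSpace X] (V : Set (BX2 X)) : Set (X × X) :=
  {z | ∃ h : z.1 ≠ z.2, Quot.mk _ (⟨z, h⟩ : F2 X) ∈ V}

section OrderedPreimage

variable {X : Type u} [TopologicalSpace X] [T2Space X] {V : Set (BX2 X)}

theorem isOpen_orderedPreimage (hV : IsOpen V) : IsOpen (orderedPreimage V) := by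
  have hdiag : IsOpen {z : X × X | z.1 ≠ z.2} := isClosed_diagonal.isOpen_compl
  have : orderedPreimage V = Subtype.val '' (Quot.mk _ ⁻¹' V : Set (F2 X)) := by
    ext z
    exact ⟨fun ⟨hz, hzV⟩ => ⟨⟨z, hz⟩, hzV, rfl⟩,
      fun ⟨w, hw, hwz⟩ => hwz ▸ ⟨w.2, hw⟩⟩
  rw [this]
  exact hdiag.isOpenMap_subtype_val _ (hV.preimage continuous_quot_mk)

theorem hasSectionOn_orderedPreimage (hV : HasSectionOn (piG X) V) :
    HasSectionOn (fun γ : PathSp X => (γ 0, γ 1)) (orderedPreimage V) := by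
  obtain ⟨s, hs⟩ := hV
  let h : orderedPreimage V → F2 X := fun z => ⟨z.1, z.2.1⟩
  have hh : Continuous h := continuous_subtype_val.subtype_mk _
  obtain ⟨L, hL⟩ := revP_involutive.exists_continuous_lift continuous_revP swapF_involutive
    exists_isOpen_disjoint_swapF_preimage continuous_pip pip_revP (π := piG X) (fun _ => rfl)
    (S := fun z => s ⟨Quot.mk _ (h z), z.2.2⟩)
    (s.continuous.comp ((continuous_quot_mk.comp hh).subtype_mk _)) hh (fun z => hs _)
  exact ⟨⟨fun z => (L z).1, continuous_subtype_val.comp L.continuous⟩,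
    fun z => congrArg Subtype.val (hL z).2⟩

end OrderedPreimage

theorem isOpen_setOf_forall_mem_of_compactSpace {Y K Z : Type*} [TopologicalSpace Y]
    [TopologicalSpace K] [TopologicalSpace Z] [CompactSpace K] {φ : Y × K → Z}
    (hφ : Continuous φ) {N : Set Z} (hN : IsOpen N) : IsOpen {y | ∀ t, φ (y, t) ∈ N} := by
  have : {y | ∀ t, φ (y, t) ∈ N} = (Prod.fst '' (φ ⁻¹' Nᶜ))ᶜ := by
    ext y
    simp
  rw [this]
  exact (isClosedMap_fst_of_compactSpace _ (hN.isClosed_compl.preimage hφ)).isOpen_compl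

theorem IsENR.exists_diagonal_subset_hasSectionOn {X : Type u} [TopologicalSpace X]
    (hX : IsENR X) : ∃ U : Set (X × X), IsOpen U ∧ Set.diagonal X ⊆ U ∧
      HasSectionOn (fun γ : PathSp X => (γ 0, γ 1)) U := by
  obtain ⟨n, e, he, N, hN, hrange, r, hr⟩ := hX
  let φ : (X × X) × unitInterval → (Fin n → ℝ) :=
    fun p => AffineMap.lineMap (e p.1.1) (e p.1.2) (p.2 : ℝ)
  have hφ : Continuous φ := by
    have he := he.continuous
    exact Continuous.lineMap (by fun_prop) (by fun_prop) (by fun_prop)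
  let U := {z : X × X | ∀ t, φ (z, t) ∈ N}
  have hre : ∀ (x : X) (v : N), (v : Fin n → ℝ) = e x → r v = x := by
    rintro x ⟨v, hv⟩ rfl
    exact hr x hv
  let H : C(U × unitInterval, X) :=
    ⟨fun p => r ⟨φ (p.1, p.2), p.1.2 p.2⟩, r.continuous.comp (by fun_prop)⟩
  refine ⟨U, isOpen_setOf_forall_mem_of_compactSpace hφ hN, ?_, H.curry, fun z => ?_⟩
  · rintro ⟨x, y⟩ (rfl : x = y) t
    simpa [φ] using hrange (Set.mem_range_self x)
  · exact Prod.ext (hre _ _ (by simp [φ])) (hre _ _ (by simp [φ]))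

theorem stmt3_general (X : Type u) [TopologicalSpace X]
    (hX : IsENR X) : TCx X ≤ TCS X := by
  have : T2Space X := by
    obtain ⟨n, e, he, -⟩ := hX
    exact he.t2Space
  rcases eq_or_ne (genus (piG X)) ⊤ with htop | htop
  · simp [TCS, htop]
  obtain ⟨k, hk, V, hVo, hVcov, hVs⟩ := exists_secCover_of_genus_ne_top htop
  obtain ⟨U₀, hU₀o, hdiag, hs₀⟩ := hX.exists_diagonal_subset_hasSectionOn
  have hcover : ∀ z ∉ U₀, ∃ i, z ∈ orderedPreimage (V i) := fun z hz => by
    have hne : z.1 ≠ z.2 := fun h => hz (hdiag h)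
    have hz' : (Quot.mk _ (⟨z, hne⟩ : F2 X) : BX2 X) ∈ ⋃ i, V i := hVcov ▸ Set.mem_univ _
    obtain ⟨i, hi⟩ := Set.mem_iUnion.mp hz'
    exact ⟨i, hne, hi⟩
  calc TCx X ≤ (k + 1 : ℕ) := genus_le_of_secCover <| secCover_succ_of_fin_cons hU₀o hs₀
        (fun i => isOpen_orderedPreimage (hVo i))
        (fun i => hasSectionOn_orderedPreimage (hVs i)) hcover
    _ = TCS X := by rw [TCS, hk, add_comm]; norm_cast

/-- For a path-connected ENR (e.g. a polyhedron), `TC(X) ≤ TC^S(X)`. -/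
theorem stmt3 (X : Type u) [TopologicalSpace X] [PathConnectedSpace X]
    (hX : IsENR X) : TCx X ≤ TCS X :=
  stmt3_general X hX
end
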